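/- arXiv:2603.08285 — 2 statements merged into one kernel-verified Lean document; each statement's English description precedes it below -/
import Mathlib

section
/- The skew-symmetric function s(x) = 2 f(x) G(λ x) is a probability density function on ℝ for every λ ∈ ℝ; that is, ∫_ℝ 2 f(x) G(λ x) dx = 1. -/
open MeasureTheory

/-- The skew-symmetric function `s(x) = 2 f(x) G(λ x)` is a probability density:
`∫ 2 f(x) G(λ x) dx = 1` for every `λ`. -/
theorem skew_symmetric_integral_eq_one (f G : ℝ → ℝ)
    (hmf : Measurable f) (hf0 : ∀ x, 0 ≤ f x) (hfsymm : ∀ x, f (-x) = f x)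
    (hif : Integrable f) (hpf : ∫ x, f x = 1)
    (hmG : Measurable G) (hG0 : ∀ u, 0 ≤ G u) (hG1 : ∀ u, G u ≤ 1)
    (hGsymm : ∀ u, G (-u) = 1 - G u) :
    ∀ l : ℝ, ∫ x, 2 * f x * G (l * x) = 1 := by
  intro l
  have hmeas : Measurable fun x : ℝ => f x * G (l * x) :=
    hmf.mul (hmG.comp (measurable_const.mul measurable_id))
  have hibd : Integrable (fun x : ℝ => f x * G (l * x)) := by
    refine hif.mono' hmeas.aestronglyMeasurable (Filter.Eventually.of_forall fun x => ?_)
    rw [Real.norm_eq_abs, abs_mul, abs_of_nonneg (hf0 x), abs_of_nonneg (hG0 _)]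
    calc f x * G (l * x) ≤ f x * 1 := by
          exact mul_le_mul_of_nonneg_left (hG1 _) (hf0 x)
      _ = f x := mul_one _
  have hneg : (∫ x, f x * G (l * x)) = ∫ x, f x * G (l * (-x)) := by
    rw [← integral_neg_eq_self (fun x => f x * G (l * x))]
    congr 1
    funext x
    rw [hfsymm]
  have key : (∫ x, f x * G (l * x)) + (∫ x, f x * G (l * x)) = 1 := by
    nth_rewrite 2 [hneg]
    have hibd2 : Integrable (fun x : ℝ => f x * G (l * (-x))) := by
      have : (fun x : ℝ => f x * G (l * (-x))) = (fun x => f x * G (l * x)) ∘ Neg.neg := by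
        funext x; simp [hfsymm]
      rw [this]
      exact hibd.comp_neg
    rw [← integral_add hibd hibd2]
    rw [← hpf]
    congr 1
    funext x
    have : l * (-x) = -(l * x) := by ring
    rw [this, hGsymm]
    ring
  have : (∫ x, 2 * f x * G (l * x)) = 2 * ∫ x, f x * G (l * x) := by
    rw [← integral_const_mul]
    congr 1; funext x; ring
  rw [this]; linarith
end

section
/- The skew-symmetric density with odd perturbation function ω integrates to 1: ∫_ℝ 2 f(x) G(λ ω(x)) dx = 1 for every λ ∈ ℝ. -/
open MeasureTheory

/-- The skew-symmetric density with odd perturbation `ω` integrates to one: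
`∫ 2 f(x) G(λ ω(x)) dx = 1` for every `λ`. -/
theorem skew_symmetric_omega_integral_eq_one (f G ω : ℝ → ℝ)
    (hmf : Measurable f) (hf0 : ∀ x, 0 ≤ f x) (hfsymm : ∀ x, f (-x) = f x)
    (hif : Integrable f) (hpf : ∫ x, f x = 1)
    (hmG : Measurable G) (hG0 : ∀ u, 0 ≤ G u) (hG1 : ∀ u, G u ≤ 1)
    (hGsymm : ∀ u, G (-u) = 1 - G u)
    (hmω : Measurable ω) (hωodd : ∀ x, ω (-x) = -ω x) :
    ∀ l : ℝ, ∫ x, 2 * f x * G (l * ω x) = 1 := by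
  intro l
  set h : ℝ → ℝ := fun x => 2 * f x * G (l * ω x) with hh
  have hmeas : Measurable h := (measurable_const.mul hmf).mul (hmG.comp (measurable_const.mul hmω))
  have hih : Integrable h := by
    refine (hif.const_mul 2).mono' hmeas.aestronglyMeasurable ?_
    filter_upwards with x
    have h1 : 0 ≤ h x := mul_nonneg (by linarith [hf0 x]) (hG0 _)
    rw [Real.norm_eq_abs, abs_of_nonneg h1]
    have h2 : h x = 2 * f x * G (l * ω x) := rfl
    rw [h2]
    nlinarith [hf0 x, hG1 (l * ω x)]
  have hneg : ∫ x, h (-x) = ∫ x, h x := integral_neg_eq_self h volume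
  have heq : ∀ x, h (-x) = 2 * f x - h x := by
    intro x
    simp only [hh, hfsymm, hωodd, mul_neg, hGsymm]
    ring
  rw [funext heq] at hneg
  have hi2f : Integrable (fun x => 2 * f x) := hif.const_mul 2
  rw [integral_sub hi2f hih] at hneg
  have h2f : ∫ x, 2 * f x = 2 := by
    rw [integral_const_mul, hpf]; norm_num
  rw [h2f] at hneg
  linarith
end
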